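/- (Lemma on eventual fixing of abundant vertices) In any candy-passing game on a finite graph G, there exists a round N such that for all rounds n ≥ N, the set of abundant vertices is the same as at round N, and each abundant vertex holds the same number of candies at round n as at round N. -/

import Mathlib

open Finset

/-- One round of the candy-passing game: each vertex holding at least its degree
passes one candy to each neighbor. -/
def candyRound {V : Type*} [Fintype V] [DecidableEq V]
    (G : SimpleGraph V) [DecidableRel G.Adj] (a : V → ℕ) : V → ℕ :=
  fun v => (if G.degree v ≤ a v then a v - G.degree v else a v) +
    ((G.neighborFinset v).filter fun u => G.degree u ≤ a u).card

/-!
An abundant vertex passes at least as many candies as it receives, and a vertex holding fewer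
than `2 deg v` candies keeps fewer than `2 deg v`, since it receives at most `deg v` and passes
`deg v` whenever it holds at least `deg v`. Hence the abundant set can only shrink and the
holdings on it can only decrease: recording `a v + 1` on abundant vertices and `0` elsewhere
gives a pointwise antitone sequence in `V → ℕ`, which is eventually constant because `<` is
well founded on functions from a finite type to `ℕ`.
-/

namespace SimpleGraph

variable {V : Type*} [Fintype V] (G : SimpleGraph V) [DecidableRel G.Adj]

/-- The `+ 1` separates an abundant vertex of degree `0` holding no candy from a vertex that is
not abundant. -/
def abundanceProfile (a : V → ℕ) (v : V) : ℕ :=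
  if 2 * G.degree v ≤ a v then a v + 1 else 0

lemma abundant_iff_and_eq_of_abundanceProfile_eq {a b : V → ℕ} {v : V}
    (h : G.abundanceProfile a v = G.abundanceProfile b v) :
    (2 * G.degree v ≤ a v ↔ 2 * G.degree v ≤ b v) ∧ (2 * G.degree v ≤ b v → a v = b v) := by
  unfold abundanceProfile at h
  split_ifs at h <;> omega

lemma card_filter_neighborFinset_le_degree (p : V → Prop) [DecidablePred p] (v : V) :
    #{u ∈ G.neighborFinset v | p u} ≤ G.degree v :=
  G.card_neighborFinset_eq_degree v ▸ card_filter_le _ _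

variable [DecidableEq V]

lemma candyRound_lt_of_lt {a : V → ℕ} {v : V} (h : a v < 2 * G.degree v) :
    candyRound G a v < 2 * G.degree v := by
  have := G.card_filter_neighborFinset_le_degree (fun u => G.degree u ≤ a u) v
  unfold candyRound
  split_ifs <;> omega

lemma candyRound_le_of_abundant {a : V → ℕ} {v : V} (h : 2 * G.degree v ≤ a v) :
    candyRound G a v ≤ a v := by
  have := G.card_filter_neighborFinset_le_degree (fun u => G.degree u ≤ a u) v
  unfold candyRound
  rw [if_pos (by omega)]
  omega

lemma abundanceProfile_candyRound_le (a : V → ℕ) :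
    G.abundanceProfile (candyRound G a) ≤ G.abundanceProfile a := by
  rw [Pi.le_def]
  intro v
  unfold abundanceProfile
  by_cases hv : 2 * G.degree v ≤ a v
  · have := G.candyRound_le_of_abundant hv
    split_ifs <;> omega
  · have := G.candyRound_lt_of_lt (not_le.mp hv)
    split_ifs <;> omega

end SimpleGraph

theorem abundant_eventually_fixed {V : Type*} [Fintype V] [DecidableEq V]
    (G : SimpleGraph V) [DecidableRel G.Adj] (a₀ : V → ℕ) :
    ∃ N : ℕ, ∀ n ≥ N, ∀ v : V,
      (2 * G.degree v ≤ (candyRound G)^[n] a₀ v ↔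
        2 * G.degree v ≤ (candyRound G)^[N] a₀ v) ∧
      (2 * G.degree v ≤ (candyRound G)^[N] a₀ v →
        (candyRound G)^[n] a₀ v = (candyRound G)^[N] a₀ v) := by
  have hanti : Antitone fun n => G.abundanceProfile ((candyRound G)^[n] a₀) :=
    antitone_nat_of_succ_le fun n => by
      simpa only [Function.iterate_succ_apply'] using G.abundanceProfile_candyRound_le _
  obtain ⟨N, hN⟩ := WellFoundedLT.antitone_chain_condition hanti
  exact ⟨N, fun n hn v =>
    G.abundant_iff_and_eq_of_abundanceProfile_eq (congrFun (hN n hn) v).symm⟩
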